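/- Let θ be a proper convex piecewise linear function on ℝ^m and z̄ ∈ dom θ. Then ∂²θ(z̄,v̄)(0) = S(z̄) for every v̄ ∈ ∂θ(z̄); in particular, the set ∂²θ(z̄,v̄)(0) does not depend on the choice of v̄ ∈ ∂θ(z̄). -/

import Mathlib

noncomputable section
open Set Filter Topology Metric
open scoped RealInnerProductSpace Pointwise NNReal Classical

/-- `Euc m` is the Euclidean space `ℝ^m`. -/
abbrev Euc (m : ℕ) := EuclideanSpace ℝ (Fin m)

variable {F G : Type*} [NormedAddCommGroup F] [InnerProductSpace ℝ F]
  [NormedAddCommGroup G] [InnerProductSpace ℝ G]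

/-- The (convex) subdifferential of an extended-real-valued function:
`∂θ(z) = {v : θ(z') ≥ θ(z) + ⟨v, z' - z⟩ for all z'}`. -/
def subdiff (θ : F → EReal) (z : F) : Set F :=
  {v | ∀ z', θ z + ((⟪v, z' - z⟫ : ℝ) : EReal) ≤ θ z'}

/-- The Fréchet (regular) normal cone to `Ω` at `x`:
vectors `v` with `limsup_{y → x, y ∈ Ω} ⟨v, y - x⟩ / ‖y - x‖ ≤ 0`. -/
def frechetNormal (Ω : Set F) (x : F) : Set F :=
  {v | Filter.limsup (fun y => ⟪v, y - x⟫ / ‖y - x‖) (𝓝[Ω] x) ≤ 0}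

/-- The limiting (Mordukhovich) normal cone to `Ω` at `x`. -/
def limitingNormal (Ω : Set F) (x : F) : Set F :=
  {v | ∃ xs vs : ℕ → F, (∀ k, xs k ∈ Ω) ∧ Filter.Tendsto xs Filter.atTop (𝓝 x) ∧
    Filter.Tendsto vs Filter.atTop (𝓝 v) ∧ ∀ k, vs k ∈ frechetNormal Ω (xs k)}

/-- Pairing into the `ℓ²`-product of two inner product spaces. -/
def pl2 (x : F) (y : G) : WithLp 2 (F × G) := (WithLp.equiv 2 (F × G)).symm (x, y)

/-- The second-order subdifferential (generalized Hessian)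
`∂²θ(z,v)(u) = {w : (w,-u) ∈ N((z,v); gph ∂θ)}`. -/
def sosd (θ : F → EReal) (z v : F) (u : F) : Set F :=
  {w | pl2 w (-u) ∈ limitingNormal
    {q : WithLp 2 (F × F) | ((WithLp.equiv 2 (F × F)) q).2 ∈ subdiff θ ((WithLp.equiv 2 (F × F)) q).1}
    (pl2 z v)}

/-- The polyhedral domain `{z : ⟨d i, z⟩ ≤ β i for all i}` of a CPWL function. -/
def cpwlDom {m p : ℕ} (d : Fin p → Euc m) (β : Fin p → ℝ) : Set (Euc m) :=
  {z | ∀ i, ⟪d i, z⟫ ≤ β i}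

/-- The CPWL function determined by the data `(a, α, d, β)`:
`θ(z) = max_i (⟨a i, z⟩ - α i)` on its polyhedral domain and `+∞` outside. -/
def cpwlFun {m l p : ℕ} (a : Fin l → Euc m) (α : Fin l → ℝ) (d : Fin p → Euc m)
    (β : Fin p → ℝ) : Euc m → EReal :=
  fun z => if z ∈ cpwlDom d β then (((⨆ i, (⟪a i, z⟫ - α i)) : ℝ) : EReal) else ⊤

/-- Active indices of the max expression at `z`. -/
def Kact {m l p : ℕ} (a : Fin l → Euc m) (α : Fin l → ℝ) (d : Fin p → Euc m) (β : Fin p → ℝ)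
    (z : Euc m) : Set (Fin l) :=
  {i | cpwlFun a α d β z = ((⟪a i, z⟫ - α i : ℝ) : EReal)}

/-- Active indices of the domain inequalities at `z`. -/
def Iact {m p : ℕ} (d : Fin p → Euc m) (β : Fin p → ℝ) (z : Euc m) : Set (Fin p) :=
  {i | ⟪d i, z⟫ = β i}

/-- Convex conic hull: all finite nonnegative combinations of elements of `s`. -/
def coneHull (s : Set F) : Set F :=
  {x | ∃ (n : ℕ) (c : Fin n → ℝ) (y : Fin n → F), (∀ i, 0 ≤ c i) ∧ (∀ i, y i ∈ s) ∧
    x = ∑ i, c i • y i}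

/-- `Spar θ z` is the linear subspace parallel to the affine hull of `∂θ(z)`. -/
def Spar (θ : F → EReal) (z : F) : Submodule ℝ F := (affineSpan ℝ (subdiff θ z)).direction

/-- A convex polyhedron: a finite intersection of closed halfspaces. -/
def IsPolyhedron {V : Type*} [AddCommGroup V] [Module ℝ V] (C : Set V) : Prop :=
  ∃ (N : ℕ) (f : Fin N → V →ₗ[ℝ] ℝ) (b : Fin N → ℝ), C = {x | ∀ i, f i x ≤ b i}

/-- A proper convex piecewise linear function with values in `ℝ ∪ {+∞}`:
its epigraph is a convex polyhedron, it never takes the value `-∞`, and it is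
not identically `+∞`. -/
def IsCPWL {V : Type*} [AddCommGroup V] [Module ℝ V] (f : V → EReal) : Prop :=
  IsPolyhedron {xt : V × ℝ | f xt.1 ≤ (xt.2 : EReal)} ∧ (∀ x, f x ≠ ⊥) ∧ (∃ x, f x ≠ ⊤)

/-- Local argmin set `M_γ(w,v)` of `x ↦ φ(x,w) - ⟨v,x⟩` over the ball `‖x - xb‖ ≤ γ`,
with the convention that minimizers at which the objective is `+∞` are discarded. -/
def argminLoc {n d : ℕ} (φ : Euc n → Euc d → EReal) (xb : Euc n) (γ : ℝ) (w : Euc d)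
    (v : Euc n) : Set (Euc n) :=
  {x | ‖x - xb‖ ≤ γ ∧ φ x w ≠ ⊤ ∧
    ∀ y, ‖y - xb‖ ≤ γ → φ x w - ((⟪v, x⟫ : ℝ) : EReal) ≤ φ y w - ((⟪v, y⟫ : ℝ) : EReal)}

/-- Local optimal value `m_γ(w,v)` of `x ↦ φ(x,w) - ⟨v,x⟩` over the ball `‖x - xb‖ ≤ γ`. -/
def infLoc {n d : ℕ} (φ : Euc n → Euc d → EReal) (xb : Euc n) (γ : ℝ) (w : Euc d)
    (v : Euc n) : EReal :=
  ⨅ x ∈ {x : Euc n | ‖x - xb‖ ≤ γ}, (φ x w - ((⟪v, x⟫ : ℝ) : EReal))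

/-- `xb` is a fully stable locally optimal solution of
`minimize φ(x,wb) - ⟨vb,x⟩` : for some `γ > 0` and neighborhoods `W × V` of `(wb,vb)`,
the local argmin map is single-valued and Lipschitz with value `xb` at `(wb,vb)`, and the
local optimal value function is finite and Lipschitz. -/
def FullyStableSol {n d : ℕ} (φ : Euc n → Euc d → EReal) (xb : Euc n) (wb : Euc d)
    (vb : Euc n) : Prop :=
  ∃ γ > (0 : ℝ), ∃ W ∈ 𝓝 wb, ∃ V ∈ 𝓝 vb,
    (∃ σ : Euc d × Euc n → Euc n,
      (∃ K : ℝ≥0, LipschitzOnWith K σ (W ×ˢ V)) ∧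
      (∀ w ∈ W, ∀ v ∈ V, argminLoc φ xb γ w v = {σ (w, v)}) ∧ σ (wb, vb) = xb) ∧
    (∃ μ : Euc d × Euc n → ℝ,
      (∃ K : ℝ≥0, LipschitzOnWith K μ (W ×ˢ V)) ∧
      ∀ w ∈ W, ∀ v ∈ V, infLoc φ xb γ w v = ((μ (w, v) : ℝ) : EReal))

/-- The partial limiting subdifferential `∂ₓψ(x,w)` defined through the limiting normal
cone to the epigraph of `ψ(·,w)`. -/
def partialSubdiffX {n d : ℕ} (ψ : Euc n → Euc d → EReal) (x : Euc n) (w : Euc d) :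
    Set (Euc n) :=
  {v | ∃ r : ℝ, ψ x w = (r : EReal) ∧
    pl2 v (-1 : ℝ) ∈ limitingNormal
      {q : WithLp 2 (Euc n × ℝ) |
        ψ ((WithLp.equiv 2 (Euc n × ℝ)) q).1 w ≤ ((((WithLp.equiv 2 (Euc n × ℝ)) q).2 : ℝ) : EReal)}
      (pl2 x r)}

/-- The coderivative `D*∂ₓψ(xb,wb,qb)(u)` of the partial subdifferential mapping,
via the limiting normal cone to its graph in `ℝ^n × ℝ^d × ℝ^n`. -/
def coderivPartialSubdiffX {n d : ℕ} (ψ : Euc n → Euc d → EReal) (xb : Euc n) (wb : Euc d)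
    (qb : Euc n) (u : Euc n) : Set (Euc n × Euc d) :=
  {P | pl2 (pl2 P.1 P.2) (-u) ∈ limitingNormal
    {t : WithLp 2 (WithLp 2 (Euc n × Euc d) × Euc n) |
      ((WithLp.equiv 2 (WithLp 2 (Euc n × Euc d) × Euc n)) t).2 ∈ partialSubdiffX ψ
        ((WithLp.equiv 2 (Euc n × Euc d)) (((WithLp.equiv 2 (WithLp 2 (Euc n × Euc d) × Euc n)) t).1)).1
        ((WithLp.equiv 2 (Euc n × Euc d)) (((WithLp.equiv 2 (WithLp 2 (Euc n × Euc d) × Euc n)) t).1)).2}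
    (pl2 (pl2 xb wb) qb)}

/-- Partial Hessian in `x` : the derivative in `x` of the partial gradient in `x`. -/
def hessXX {n d : ℕ} (g : Euc n → Euc d → ℝ) (xb : Euc n) (wb : Euc d) : Euc n →L[ℝ] Euc n :=
  fderiv ℝ (fun x => gradient (fun x' => g x' wb) x) xb

/-- Mixed partial Hessian: derivative in `w` of the partial gradient in `x`. -/
def hessWX {n d : ℕ} (g : Euc n → Euc d → ℝ) (xb : Euc n) (wb : Euc d) : Euc d →L[ℝ] Euc n :=
  fderiv ℝ (fun w => gradient (fun x' => g x' w) xb) wb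

/-!
Since `θ` is proper, `∂θ` is monotone. If `v` and `v + t • w` both lie in `∂θ(z̄)`, testing
monotonicity against `(z̄, v + t • w)` shows that `(w, 0)` is a Fréchet normal to `gph ∂θ` at
`(z̄, v)`; for `w ∈ S(z̄)` such `v` exist arbitrarily close to any `v̄ ∈ ∂θ(z̄)` by convexity of
`∂θ(z̄)`, whence `S(z̄) ⊆ ∂²θ(z̄,v̄)(0)` for every proper `θ`.

Conversely, group the points `z` of `dom θ` into cells by requiring the pieces `K` and the
constraints `I` to be active. On a cell `θ` is affine, and the cell of `z` extends beyond `z`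
along the line from any of its points `z'`, so `∂θ(z) ⊆ ∂θ(z')`. Hence `gph ∂θ` is the finite union of the closed convex sets
`C × ⋂_{z ∈ C} ∂θ(z)` over the cells `C`, and a limiting normal `(w, 0)` at `(z̄, v̄)` is a normal
in the sense of convex analysis to one of them containing `(z̄, v̄)`. The cell of `z̄` contains
`z̄ + t • ξ` for `ξ ⊥ S(z̄)` and small `t > 0`, so `⟪w, ξ⟫ ≤ 0` on `S(z̄)ᗮ`, i.e. `w ∈ S(z̄)`.
-/

section Subdifferential

variable {θ : F → EReal} {z z' u v : F}

lemma add_inner_le_of_mem_subdiff {r r' : ℝ} (hz : θ z = r) (hz' : θ z' = r')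
    (hv : v ∈ subdiff θ z) : r + ⟪v, z' - z⟫ ≤ r' := by
  have := hv z'
  rwa [hz, hz', ← EReal.coe_add, EReal.coe_le_coe_iff] at this

lemma ne_top_of_mem_subdiff (htop : ∃ x, θ x ≠ ⊤) (hv : v ∈ subdiff θ z) : θ z ≠ ⊤ := by
  intro h
  obtain ⟨x, hx⟩ := htop
  have := hv x
  rw [h, EReal.top_add_coe, top_le_iff] at this
  exact hx this

lemma inner_sub_nonneg_of_mem_subdiff (hbot : ∀ x, θ x ≠ ⊥) (htop : ∃ x, θ x ≠ ⊤)
    (hu : u ∈ subdiff θ z) (hv : v ∈ subdiff θ z') : 0 ≤ ⟪u - v, z - z'⟫ := by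
  have hz := EReal.coe_toReal (ne_top_of_mem_subdiff htop hu) (hbot z)
  have hz' := EReal.coe_toReal (ne_top_of_mem_subdiff htop hv) (hbot z')
  have h₁ := add_inner_le_of_mem_subdiff hz.symm hz'.symm hu
  have h₂ := add_inner_le_of_mem_subdiff hz'.symm hz.symm hv
  simp only [inner_sub_left, inner_sub_right] at h₁ h₂ ⊢
  linarith

variable (θ z) in
theorem convex_subdiff : Convex ℝ (subdiff θ z) := by
  intro u hu v hv s t hs ht hst y
  have hcomb : ⟪s • u + t • v, y - z⟫ ≤ max ⟪u, y - z⟫ ⟪v, y - z⟫ := by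
    rw [inner_add_left, real_inner_smul_left, real_inner_smul_left]
    exact Convex.combo_le_max _ _ hs ht hst
  rcases max_choice ⟪u, y - z⟫ ⟪v, y - z⟫ with h | h <;> rw [h] at hcomb
  · exact (add_le_add_right (EReal.coe_le_coe_iff.2 hcomb) _).trans (hu y)
  · exact (add_le_add_right (EReal.coe_le_coe_iff.2 hcomb) _).trans (hv y)

lemma EReal.continuous_add_coe (c : EReal) : Continuous fun x : ℝ => c + (x : EReal) :=
  continuous_iff_continuousAt.2 fun x =>
    (EReal.continuousAt_add (Or.inr (EReal.coe_ne_bot x)) (Or.inr (EReal.coe_ne_top x))).comp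
      (continuousAt_const.prodMk continuous_coe_real_ereal.continuousAt)

variable (θ z) in
theorem isClosed_subdiff : IsClosed (subdiff θ z) := by
  simp only [subdiff, ofPred_forall]
  exact isClosed_iInter fun y => isClosed_le
    ((EReal.continuous_add_coe _).comp (continuous_id.inner continuous_const)) continuous_const

theorem subdiff_subset_of_le_affine_extension {r r' s : ℝ} (hz : θ z = r) (hz' : θ z' = r')
    (hs : 0 < s) (hext : θ (z + s • (z - z')) ≤ ((r + s * (r - r') : ℝ) : EReal)) :
    subdiff θ z ⊆ subdiff θ z' := by
  intro v hv y
  have h₁ : ⟪v, z - z'⟫ ≤ r - r' := by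
    have := (hv _).trans hext
    rw [hz, add_sub_cancel_left, real_inner_smul_right, ← EReal.coe_add,
      EReal.coe_le_coe_iff] at this
    nlinarith
  have h₂ : ⟪v, y - z'⟫ = ⟪v, y - z⟫ + ⟪v, z - z'⟫ := by
    rw [← inner_add_right, sub_add_sub_cancel]
  calc θ z' + ⟪v, y - z'⟫ = ((r' + ⟪v, y - z'⟫ : ℝ) : EReal) := by rw [hz', EReal.coe_add]
    _ ≤ ((r + ⟪v, y - z⟫ : ℝ) : EReal) := EReal.coe_le_coe_iff.2 (by linarith)
    _ = θ z + ⟪v, y - z⟫ := by rw [hz, EReal.coe_add]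
    _ ≤ θ y := hv y

end Subdifferential

theorem Convex.exists_add_smul_mem_of_mem_vectorSpan {C : Set F} (hC : Convex ℝ C)
    (hne : C.Nonempty) {w : F} (hw : w ∈ vectorSpan ℝ C) :
    ∃ v ∈ C, ∃ t : ℝ, 0 < t ∧ v + t • w ∈ C := by
  obtain ⟨c, hc⟩ := hne
  have hA : Convex ℝ (C -ᵥ C) := hC.sub hC
  set T := ConvexCone.hull ℝ (C -ᵥ C)
  have hmem : ∀ {x}, x ∈ T ↔ ∃ t : ℝ, 0 < t ∧ ∃ u ∈ C, ∃ u' ∈ C, t • (u -ᵥ u') = x := by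
    intro x
    simp only [T, ConvexCone.mem_hull_of_convex hA, Set.mem_smul_set, Set.mem_vsub]
    grind
  have hneg : ∀ x ∈ T, -x ∈ T := by
    intro x hx
    obtain ⟨t, ht, u, hu, u', hu', rfl⟩ := hmem.1 hx
    exact hmem.2 ⟨t, ht, u', hu', u, hu, by simp [smul_sub]⟩
  have hzero : (0 : F) ∈ T := ConvexCone.subset_hull ⟨c, hc, c, hc, vsub_self c⟩
  have hwT : w ∈ T := by
    rw [vectorSpan_def] at hw
    induction hw using Submodule.span_induction with
    | mem x hx => exact ConvexCone.subset_hull hx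
    | zero => exact hzero
    | add x y _ _ hx hy => exact T.add_mem hx hy
    | smul r x _ hx =>
      rcases lt_trichotomy r 0 with hr | rfl | hr
      · simpa using T.smul_mem (neg_pos.2 hr) (hneg x hx)
      · simpa using hzero
      · exact T.smul_mem hr hx
  obtain ⟨t, ht, u, hu, u', hu', htw⟩ := hmem.1 hwT
  refine ⟨u', hu', t⁻¹, inv_pos.2 ht, ?_⟩
  rw [← htw, smul_smul, inv_mul_cancel₀ ht.ne', one_smul, vsub_eq_sub, add_sub_cancel]
  exact hu

theorem Submodule.mem_of_forall_mem_orthogonal_inner_nonpos (K : Submodule ℝ F)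
    [K.HasOrthogonalProjection] {w : F} (h : ∀ ξ ∈ Kᗮ, ⟪w, ξ⟫ ≤ 0) : w ∈ K := by
  rw [← K.orthogonal_orthogonal, Submodule.mem_orthogonal]
  intro ξ hξ
  have := h (-ξ) (Kᗮ.neg_mem hξ)
  rw [inner_neg_right] at this
  linarith [h ξ hξ, real_inner_comm w ξ]

section NormalCone

variable {Ω : Set F} {x v : F}

lemma inner_sub_div_norm_le (v x y : F) : ⟪v, y - x⟫ / ‖y - x‖ ≤ ‖v‖ :=
  div_le_of_le_mul₀ (norm_nonneg _) (norm_nonneg _) (real_inner_le_norm _ _)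

lemma neg_norm_le_inner_sub_div_norm (v x y : F) : -‖v‖ ≤ ⟪v, y - x⟫ / ‖y - x‖ := by
  have := inner_sub_div_norm_le (-v) x y
  rw [inner_neg_left, neg_div, norm_neg] at this
  linarith

theorem mem_frechetNormal_of_forall_eventually_le (hx : x ∈ Ω)
    (h : ∀ ε > 0, ∀ᶠ y in 𝓝[Ω] x, ⟪v, y - x⟫ ≤ ε * ‖y - x‖) : v ∈ frechetNormal Ω x := by
  have : (𝓝[Ω] x).NeBot := mem_closure_iff_nhdsWithin_neBot.1 (subset_closure hx)
  rw [frechetNormal, mem_ofPred_eq]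
  refine le_of_forall_gt_imp_ge_of_dense fun ε hε => limsup_le_of_le ?_ ?_
  · exact (isBoundedUnder_of ⟨-‖v‖, neg_norm_le_inner_sub_div_norm v x⟩).isCoboundedUnder_le
  · exact (h ε hε).mono fun y hy => div_le_of_le_mul₀ (norm_nonneg _) hε.le hy

theorem inner_nonpos_of_mem_frechetNormal {P : Set F} {y : F} (hv : v ∈ frechetNormal Ω x)
    (hPΩ : P ⊆ Ω) (hP : Convex ℝ P) (hx : x ∈ P) (hy : y ∈ P) : ⟪v, y - x⟫ ≤ 0 := by
  rcases eq_or_ne y x with rfl | hyx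
  · simp
  have hpos : 0 < ‖y - x‖ := norm_pos_iff.2 (sub_ne_zero.2 hyx)
  have hcurve : Tendsto (fun t : ℝ => x + t • (y - x)) (𝓝[>] 0) (𝓝[Ω] x) := by
    refine tendsto_nhdsWithin_iff.2 ⟨?_, ?_⟩
    · exact ((continuous_const.add (continuous_id.smul continuous_const)).tendsto' 0 x
        (by simp)).mono_left nhdsWithin_le_nhds
    · filter_upwards [Ioc_mem_nhdsGT zero_lt_one] with t ht
      exact hPΩ (hP.add_smul_sub_mem hx hy ⟨ht.1.le, ht.2⟩)
  have hquot : ∀ᶠ t in 𝓝[>] (0 : ℝ),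
      ⟪v, y - x⟫ / ‖y - x‖ ≤ ⟪v, (x + t • (y - x)) - x⟫ / ‖(x + t • (y - x)) - x‖ := by
    filter_upwards [self_mem_nhdsWithin] with t (ht : 0 < t)
    rw [add_sub_cancel_left, real_inner_smul_right, norm_smul, Real.norm_of_nonneg ht.le,
      mul_div_mul_left _ _ ht.ne']
  have hle := (le_limsup_of_frequently_le (hcurve.frequently hquot.frequently)
    (isBoundedUnder_of ⟨‖v‖, inner_sub_div_norm_le v x⟩)).trans hv
  simpa using (div_le_iff₀ hpos).1 hle

theorem exists_forall_inner_nonpos_of_mem_limitingNormal {ι : Type*} [Finite ι]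
    {P : ι → Set F} (hPΩ : ∀ j, P j ⊆ Ω) (hΩP : Ω ⊆ ⋃ j, P j) (hconv : ∀ j, Convex ℝ (P j))
    (hclosed : ∀ j, IsClosed (P j)) (hv : v ∈ limitingNormal Ω x) :
    ∃ j, x ∈ P j ∧ ∀ y ∈ P j, ⟪v, y - x⟫ ≤ 0 := by
  obtain ⟨xs, vs, hxΩ, hxs, hvs, hN⟩ := hv
  choose J hJ using fun k => mem_iUnion.1 (hΩP (hxΩ k))
  obtain ⟨j, hj⟩ := Finite.exists_infinite_fiber J
  have hfreq : ∃ᶠ k in atTop, xs k ∈ P j :=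
    (Nat.frequently_atTop_iff_infinite.2 (Set.infinite_coe_iff.1 hj)).mono
      fun k (hk : J k = j) => hk ▸ hJ k
  refine ⟨j, (hclosed j).mem_of_frequently_of_tendsto hfreq hxs, fun y hy => ?_⟩
  refine le_of_tendsto_of_frequently (hvs.inner (tendsto_const_nhds.sub hxs)) ?_
  exact hfreq.mono fun k hk => inner_nonpos_of_mem_frechetNormal (hN k) (hPΩ j) (hconv j) hk hy

end NormalCone

section SecondOrder

variable {θ : F → EReal} {z v w : F}

variable (θ) in
def subdiffGraph : Set (WithLp 2 (F × F)) := {q | q.snd ∈ subdiff θ q.fst}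

lemma mem_sosd_iff {u : F} :
    w ∈ sosd θ z v u ↔ pl2 w (-u) ∈ limitingNormal (subdiffGraph θ) (pl2 z v) := Iff.rfl

@[simp] lemma fst_pl2 {X Y : Type*} (x : X) (y : Y) : (pl2 x y).fst = x := rfl

@[simp] lemma snd_pl2 {X Y : Type*} (x : X) (y : Y) : (pl2 x y).snd = y := rfl

lemma inner_pl2_zero (w : F) (q : WithLp 2 (F × F)) : ⟪pl2 w 0, q⟫ = ⟪w, q.fst⟫ := by
  simp [WithLp.prod_inner_apply, pl2]

lemma continuous_pl2_right (x : F) : Continuous fun y : G => pl2 x y :=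
  (WithLp.prodContinuousLinearEquiv 2 ℝ F G).symm.continuous.comp
    (continuous_const.prodMk continuous_id)

theorem pl2_mem_frechetNormal_of_monotone {Ω : Set (WithLp 2 (F × F))}
    (hmono : ∀ q ∈ Ω, ∀ q' ∈ Ω, 0 ≤ ⟪q.snd - q'.snd, q.fst - q'.fst⟫) {t : ℝ} (ht : 0 < t)
    (hzv : pl2 z v ∈ Ω) (hzvt : pl2 z (v + t • w) ∈ Ω) :
    pl2 w 0 ∈ frechetNormal Ω (pl2 z v) := by
  refine mem_frechetNormal_of_forall_eventually_le hzv fun ε hε => ?_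
  filter_upwards [self_mem_nhdsWithin,
    mem_nhdsWithin_of_mem_nhds (ball_mem_nhds _ (mul_pos hε ht))] with q hq hqb
  have hfst : ‖q.fst - z‖ ≤ ‖q - pl2 z v‖ := WithLp.norm_fst_le _ (q - pl2 z v)
  have hsnd : ‖q.snd - v‖ < ε * t :=
    (WithLp.norm_snd_le _ (q - pl2 z v)).trans_lt (by rwa [mem_ball, dist_eq_norm] at hqb)
  have hm := hmono q hq _ hzvt
  have hcs := real_inner_le_norm (q.snd - v) (q.fst - z)
  simp only [fst_pl2, snd_pl2, sub_add_eq_sub_sub, inner_sub_left, real_inner_smul_left] at hm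
  rw [inner_sub_left] at hcs
  rw [inner_pl2_zero, WithLp.sub_fst, fst_pl2]
  nlinarith [norm_nonneg (q.fst - z), norm_nonneg (q.snd - v)]

theorem spar_subset_sosd_zero (hbot : ∀ x, θ x ≠ ⊥) (htop : ∃ x, θ x ≠ ⊤)
    (hv : v ∈ subdiff θ z) : (Spar θ z : Set F) ⊆ sosd θ z v 0 := by
  intro w hw
  rw [mem_sosd_iff, neg_zero]
  obtain ⟨v₀, hv₀, t, ht, hv₀t⟩ := (convex_subdiff θ z).exists_add_smul_mem_of_mem_vectorSpan
    ⟨v, hv⟩ (by rwa [Spar, direction_affineSpan] at hw)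
  set s : ℕ → ℝ := fun k => 1 / ((k : ℝ) + 1)
  have hs : ∀ k, 0 < s k := fun k => by positivity
  have hs₁ : ∀ k, s k ≤ 1 := fun k => by
    simp only [s]; rw [div_le_one (by positivity)]; linarith [k.cast_nonneg (α := ℝ)]
  set vs : ℕ → F := fun k => v + s k • (v₀ - v)
  have hvs : ∀ k, vs k ∈ subdiff θ z := fun k =>
    (convex_subdiff θ z).add_smul_sub_mem hv hv₀ ⟨(hs k).le, hs₁ k⟩
  have hvst : ∀ k, vs k + (s k * t) • w ∈ subdiff θ z := fun k => by
    convert (convex_subdiff θ z).add_smul_sub_mem hv hv₀t ⟨(hs k).le, hs₁ k⟩ using 1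
    simp only [vs]; module
  have hlim : Tendsto vs atTop (𝓝 v) := by
    simpa [vs, s] using (tendsto_const_nhds (x := v)).add
      ((tendsto_one_div_add_atTop_nhds_zero_nat (𝕜 := ℝ)).smul_const (v₀ - v))
  refine ⟨fun k => pl2 z (vs k), fun _ => pl2 w 0, hvs,
    ((continuous_pl2_right z).tendsto v).comp hlim, tendsto_const_nhds, fun k => ?_⟩
  exact pl2_mem_frechetNormal_of_monotone
    (fun _ hq _ hq' => inner_sub_nonneg_of_mem_subdiff hbot htop hq hq') (mul_pos (hs k) ht)
    (hvs k) (hvst k)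

end SecondOrder

lemma eventually_inner_add_smul_le {c z η : F} {b : ℝ} (hz : ⟪c, z⟫ ≤ b)
    (hη : ⟪c, z⟫ = b → ⟪c, η⟫ = 0) : ∀ᶠ t in 𝓝 (0 : ℝ), ⟪c, z + t • η⟫ ≤ b := by
  rcases hz.eq_or_lt with h | h
  · exact .of_forall fun t => by
      rw [inner_add_right, real_inner_smul_right, hη h, h, mul_zero, add_zero]
  · have : ContinuousAt (fun t : ℝ => ⟪c, z + t • η⟫) 0 := by fun_prop
    filter_upwards [this.eventually_lt continuousAt_const (by simpa using h)] with t ht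
    exact ht.le

section CPWL

variable {m l p : ℕ} {a : Fin l → Euc m} {α : Fin l → ℝ} {d : Fin p → Euc m} {β : Fin p → ℝ}
  {z z' v : Euc m}

lemma cpwlFun_of_mem (hz : z ∈ cpwlDom d β) :
    cpwlFun a α d β z = ((⨆ i, (⟪a i, z⟫ - α i) : ℝ) : EReal) := if_pos hz

lemma cpwlFun_of_notMem (hz : z ∉ cpwlDom d β) : cpwlFun a α d β z = ⊤ := if_neg hz

lemma cpwlFun_ne_bot : cpwlFun a α d β z ≠ ⊥ := by
  unfold cpwlFun; split_ifs <;> simp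

lemma exists_cpwlFun_ne_top (hdom : (cpwlDom d β).Nonempty) : ∃ z, cpwlFun a α d β z ≠ ⊤ :=
  hdom.imp fun _ hz => by simp [cpwlFun_of_mem hz]

lemma mem_cpwlDom_of_ne_top (h : cpwlFun a α d β z ≠ ⊤) : z ∈ cpwlDom d β :=
  not_not.1 fun hz => h (cpwlFun_of_notMem hz)

lemma inner_sub_le_iSup (k : Fin l) (z : Euc m) : ⟪a k, z⟫ - α k ≤ ⨆ i, (⟪a i, z⟫ - α i) :=
  le_ciSup (f := fun i => ⟪a i, z⟫ - α i) (Set.finite_range _).bddAbove k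

lemma coe_le_cpwlFun (k : Fin l) (z : Euc m) :
    ((⟪a k, z⟫ - α k : ℝ) : EReal) ≤ cpwlFun a α d β z := by
  by_cases hz : z ∈ cpwlDom d β
  · rw [cpwlFun_of_mem hz, EReal.coe_le_coe_iff]
    exact inner_sub_le_iSup k z
  · rw [cpwlFun_of_notMem hz]
    exact le_top

lemma cpwlFun_of_mem_Kact {k : Fin l} (hk : k ∈ Kact a α d β z) :
    cpwlFun a α d β z = ((⟪a k, z⟫ - α k : ℝ) : EReal) := hk

lemma mem_Kact_iff (hz : z ∈ cpwlDom d β) {k : Fin l} :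
    k ∈ Kact a α d β z ↔ ∀ j, ⟪a j, z⟫ - α j ≤ ⟪a k, z⟫ - α k := by
  have : Nonempty (Fin l) := ⟨k⟩
  rw [Kact, mem_ofPred_eq, cpwlFun_of_mem hz, EReal.coe_eq_coe_iff]
  exact ⟨fun h j => h ▸ inner_sub_le_iSup j z,
    fun h => le_antisymm (ciSup_le h) (inner_sub_le_iSup k z)⟩

lemma Kact_nonempty (hl : 0 < l) (hz : z ∈ cpwlDom d β) : (Kact a α d β z).Nonempty := by
  have : Nonempty (Fin l) := ⟨⟨0, hl⟩⟩
  obtain ⟨k, hk⟩ := Finite.exists_max fun i : Fin l => ⟪a i, z⟫ - α i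
  exact ⟨k, (mem_Kact_iff hz).2 hk⟩

lemma a_mem_subdiff_cpwlFun {k : Fin l} (hk : k ∈ Kact a α d β z) :
    a k ∈ subdiff (cpwlFun a α d β) z := fun y => by
  rw [cpwlFun_of_mem_Kact hk, ← EReal.coe_add]
  refine le_trans (le_of_eq ?_) (coe_le_cpwlFun k y)
  rw [inner_sub_right]
  ring_nf

lemma add_mem_subdiff_cpwlFun {i : Fin p} (hi : i ∈ Iact d β z)
    (hv : v ∈ subdiff (cpwlFun a α d β) z) : v + d i ∈ subdiff (cpwlFun a α d β) z := by
  intro y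
  by_cases hy : y ∈ cpwlDom d β
  · refine le_trans ?_ (hv y)
    gcongr
    have : ⟪d i, y⟫ ≤ ⟪d i, z⟫ := (hy i).trans_eq (hi : ⟪d i, z⟫ = β i).symm
    rw [inner_add_left, inner_sub_right (d i)]
    linarith
  · rw [cpwlFun_of_notMem hy]
    exact le_top

variable (a α d β) in
def cpwlCell (K : Set (Fin l)) (I : Set (Fin p)) : Set (Euc m) :=
  {z | z ∈ cpwlDom d β ∧ K ⊆ Kact a α d β z ∧ I ⊆ Iact d β z}

lemma mem_cpwlCell_self (hz : z ∈ cpwlDom d β) :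
    z ∈ cpwlCell a α d β (Kact a α d β z) (Iact d β z) :=
  ⟨hz, subset_rfl, subset_rfl⟩

lemma cpwlCell_subset_of_mem {K : Set (Fin l)} {I : Set (Fin p)}
    (hz : z ∈ cpwlCell a α d β K I) :
    cpwlCell a α d β (Kact a α d β z) (Iact d β z) ⊆ cpwlCell a α d β K I :=
  fun _ hy => ⟨hy.1, hz.2.1.trans hy.2.1, hz.2.2.trans hy.2.2⟩

lemma mem_cpwlCell_iff {K : Set (Fin l)} {I : Set (Fin p)} :
    z ∈ cpwlCell a α d β K I ↔ (∀ i, ⟪d i, z⟫ ≤ β i) ∧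
      (∀ k ∈ K, ∀ j, ⟪a j - a k, z⟫ ≤ α j - α k) ∧ ∀ i ∈ I, ⟪d i, z⟫ = β i := by
  refine and_congr_right fun hz => and_congr ?_ Iff.rfl
  simp only [subset_def, mem_Kact_iff hz, inner_sub_left]
  exact forall₂_congr fun _ _ => forall_congr' fun _ => by constructor <;> intro <;> linarith

lemma cpwlCell_eq (K : Set (Fin l)) (I : Set (Fin p)) :
    cpwlCell a α d β K I = (⋂ i, {z | ⟪d i, z⟫ ≤ β i}) ∩
      ((⋂ k ∈ K, ⋂ j, {z | ⟪a j - a k, z⟫ ≤ α j - α k}) ∩ ⋂ i ∈ I, {z | ⟪d i, z⟫ = β i}) := by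
  ext z
  simp only [mem_cpwlCell_iff, mem_inter_iff, mem_iInter, mem_ofPred_eq]

theorem convex_cpwlCell (K : Set (Fin l)) (I : Set (Fin p)) :
    Convex ℝ (cpwlCell a α d β K I) := by
  rw [cpwlCell_eq]
  refine (convex_iInter fun i => ?_).inter
    ((convex_iInter₂ fun k _ => convex_iInter fun j => ?_).inter (convex_iInter₂ fun i _ => ?_))
  · exact convex_halfSpace_le (innerₛₗ ℝ (d i)).isLinear _
  · exact convex_halfSpace_le (innerₛₗ ℝ (a j - a k)).isLinear _
  · exact convex_hyperplane (innerₛₗ ℝ (d i)).isLinear _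

theorem isClosed_cpwlCell (K : Set (Fin l)) (I : Set (Fin p)) :
    IsClosed (cpwlCell a α d β K I) := by
  rw [cpwlCell_eq]
  refine (isClosed_iInter fun i => ?_).inter
    ((isClosed_biInter fun k _ => isClosed_iInter fun j => ?_).inter
      (isClosed_biInter fun i _ => ?_))
  · exact isClosed_le (by fun_prop) continuous_const
  · exact isClosed_le (by fun_prop) continuous_const
  · exact isClosed_eq (by fun_prop) continuous_const

theorem eventually_add_smul_mem_cpwlCell (hz : z ∈ cpwlDom d β) {η : Euc m}
    (hI : ∀ i ∈ Iact d β z, ⟪d i, η⟫ = 0)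
    (hK : ∀ j ∈ Kact a α d β z, ∀ k ∈ Kact a α d β z, ⟪a j, η⟫ = ⟪a k, η⟫) :
    ∀ᶠ t in 𝓝 (0 : ℝ), z + t • η ∈ cpwlCell a α d β (Kact a α d β z) (Iact d β z) := by
  have hdom := eventually_all.2 fun i => eventually_inner_add_smul_le (hz i) (hI i)
  have hact : ∀ᶠ t in 𝓝 (0 : ℝ), ∀ k ∈ Kact a α d β z, ∀ j,
      ⟪a j - a k, z + t • η⟫ ≤ α j - α k := by
    refine (Set.toFinite _).eventually_all.2 fun k hk => eventually_all.2 fun j => ?_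
    have hjk := (mem_Kact_iff hz).1 hk j
    refine eventually_inner_add_smul_le (by rw [inner_sub_left]; linarith) fun h => ?_
    have hj : j ∈ Kact a α d β z := (mem_Kact_iff hz).2 fun i => by
      have := (mem_Kact_iff hz).1 hk i
      rw [inner_sub_left] at h
      linarith
    rw [inner_sub_left, hK j hj k hk, sub_self]
  filter_upwards [hdom, hact] with t hdom hact
  refine mem_cpwlCell_iff.2 ⟨hdom, hact, fun i hi => ?_⟩
  rw [inner_add_right, real_inner_smul_right, hI i hi, mul_zero, add_zero]
  exact hi

theorem subdiff_subset_subdiff_of_mem_cpwlCell (hl : 0 < l) (hz : z ∈ cpwlDom d β)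
    (hz' : z' ∈ cpwlCell a α d β (Kact a α d β z) (Iact d β z)) :
    subdiff (cpwlFun a α d β) z ⊆ subdiff (cpwlFun a α d β) z' := by
  obtain ⟨k, hk⟩ := Kact_nonempty hl hz
  have hI : ∀ i ∈ Iact d β z, ⟪d i, z - z'⟫ = 0 := fun i hi => by
    rw [inner_sub_right, (hi : ⟪d i, z⟫ = β i), (hz'.2.2 hi : ⟪d i, z'⟫ = β i), sub_self]
  have hK : ∀ j ∈ Kact a α d β z, ∀ k ∈ Kact a α d β z, ⟪a j, z - z'⟫ = ⟪a k, z - z'⟫ := by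
    intro j hj k hk
    have h := EReal.coe_eq_coe_iff.1 ((cpwlFun_of_mem_Kact hj).symm.trans (cpwlFun_of_mem_Kact hk))
    have h' := EReal.coe_eq_coe_iff.1
      ((cpwlFun_of_mem_Kact (hz'.2.1 hj)).symm.trans (cpwlFun_of_mem_Kact (hz'.2.1 hk)))
    rw [inner_sub_right, inner_sub_right]
    linarith
  obtain ⟨s, hs, hy⟩ := (eventually_add_smul_mem_cpwlCell hz hI hK).exists_gt
  refine subdiff_subset_of_le_affine_extension (cpwlFun_of_mem_Kact hk)
    (cpwlFun_of_mem_Kact (hz'.2.1 hk)) hs (le_of_eq ?_)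
  rw [cpwlFun_of_mem_Kact (hy.2.1 hk), inner_add_right, real_inner_smul_right, inner_sub_right]
  ring_nf

variable (a α d β) in
def cpwlPiece (K : Set (Fin l)) (I : Set (Fin p)) : Set (WithLp 2 (Euc m × Euc m)) :=
  {q | q.fst ∈ cpwlCell a α d β K I ∧ ∀ y ∈ cpwlCell a α d β K I,
    q.snd ∈ subdiff (cpwlFun a α d β) y}

lemma cpwlPiece_subset_subdiffGraph (K : Set (Fin l)) (I : Set (Fin p)) :
    cpwlPiece a α d β K I ⊆ subdiffGraph (cpwlFun a α d β) :=
  fun _ hq => hq.2 _ hq.1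

lemma subdiffGraph_subset_iUnion_cpwlPiece (hl : 0 < l) (hdom : (cpwlDom d β).Nonempty) :
    subdiffGraph (cpwlFun a α d β) ⊆
      ⋃ KI : Set (Fin l) × Set (Fin p), cpwlPiece a α d β KI.1 KI.2 := by
  intro q hq
  have hz := mem_cpwlDom_of_ne_top (ne_top_of_mem_subdiff (exists_cpwlFun_ne_top hdom) hq)
  exact mem_iUnion.2 ⟨(Kact a α d β q.fst, Iact d β q.fst), mem_cpwlCell_self hz,
    fun y hy => subdiff_subset_subdiff_of_mem_cpwlCell hl hz hy hq⟩

theorem convex_cpwlPiece (K : Set (Fin l)) (I : Set (Fin p)) :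
    Convex ℝ (cpwlPiece a α d β K I) := fun _ hq _ hq' _ _ hs ht hst =>
  ⟨convex_cpwlCell K I hq.1 hq'.1 hs ht hst,
    fun y hy => convex_subdiff _ y (hq.2 y hy) (hq'.2 y hy) hs ht hst⟩

theorem isClosed_cpwlPiece (K : Set (Fin l)) (I : Set (Fin p)) :
    IsClosed (cpwlPiece a α d β K I) := by
  simp only [cpwlPiece, ofPred_and, ofPred_forall]
  exact ((isClosed_cpwlCell K I).preimage (WithLp.continuous_fst 2 _ _)).inter
    (isClosed_iInter fun y => isClosed_iInter fun _ =>
      (isClosed_subdiff _ y).preimage (WithLp.continuous_snd 2 _ _))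

theorem sosd_zero_subset_spar (hl : 0 < l) (hz : z ∈ cpwlDom d β)
    (hv : v ∈ subdiff (cpwlFun a α d β) z) :
    sosd (cpwlFun a α d β) z v 0 ⊆ Spar (cpwlFun a α d β) z := by
  intro w hw
  rw [mem_sosd_iff, neg_zero] at hw
  refine Submodule.mem_of_forall_mem_orthogonal_inner_nonpos _ fun ξ hξ => ?_
  obtain ⟨KI, ⟨hzK, hvK⟩, hpolar⟩ := exists_forall_inner_nonpos_of_mem_limitingNormal
    (fun KI : Set (Fin l) × Set (Fin p) => cpwlPiece_subset_subdiffGraph KI.1 KI.2)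
    (subdiffGraph_subset_iUnion_cpwlPiece hl ⟨z, hz⟩)
    (fun KI => convex_cpwlPiece KI.1 KI.2) (fun KI => isClosed_cpwlPiece KI.1 KI.2) hw
  have hS : ∀ u ∈ subdiff (cpwlFun a α d β) z, ⟪u - v, ξ⟫ = 0 := fun u hu =>
    Submodule.inner_right_of_mem_orthogonal
      (by rw [Spar, direction_affineSpan]; exact vsub_mem_vectorSpan ℝ hu hv) hξ
  have hI : ∀ i ∈ Iact d β z, ⟪d i, ξ⟫ = 0 := fun i hi => by
    simpa using hS _ (add_mem_subdiff_cpwlFun hi hv)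
  have hK : ∀ j ∈ Kact a α d β z, ∀ k ∈ Kact a α d β z, ⟪a j, ξ⟫ = ⟪a k, ξ⟫ := by
    intro j hj k hk
    have hj := hS _ (a_mem_subdiff_cpwlFun hj)
    have hk := hS _ (a_mem_subdiff_cpwlFun hk)
    rw [inner_sub_left] at hj hk
    linarith
  obtain ⟨t, ht, hzt⟩ := (eventually_add_smul_mem_cpwlCell hz hI hK).exists_gt
  have := hpolar (pl2 (z + t • ξ) v) ⟨cpwlCell_subset_of_mem hzK hzt, hvK⟩
  rw [inner_pl2_zero, WithLp.sub_fst, fst_pl2, fst_pl2, add_sub_cancel_left,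
    real_inner_smul_right] at this
  nlinarith

end CPWL

theorem sosd_cpwl_at_zero_eq_parallel_subspace_general {m l p : ℕ} (hl : 0 < l)
    (a : Fin l → Euc m) (α : Fin l → ℝ) (d : Fin p → Euc m) (β : Fin p → ℝ)
    (zb : Euc m) (hzb : zb ∈ cpwlDom d β) :
    ∀ vb ∈ subdiff (cpwlFun a α d β) zb,
      sosd (cpwlFun a α d β) zb vb 0 = (Spar (cpwlFun a α d β) zb : Set (Euc m)) := by
  intro vb hvb
  exact (sosd_zero_subset_spar hl hzb hvb).antisymm
    (spar_subset_sosd_zero (fun _ => cpwlFun_ne_bot) (exists_cpwlFun_ne_top ⟨zb, hzb⟩) hvb)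

/-- `∂²θ(zb,vb)(0) = S(zb)` for every `vb ∈ ∂θ(zb)`, where `S(zb)` is the
linear subspace parallel to the affine hull of `∂θ(zb)`; in particular `∂²θ(zb,vb)(0)` is
independent of the choice of `vb ∈ ∂θ(zb)`. -/
theorem sosd_cpwl_at_zero_eq_parallel_subspace {m l p : ℕ} (hl : 0 < l)
    (a : Fin l → Euc m) (α : Fin l → ℝ) (d : Fin p → Euc m) (β : Fin p → ℝ)
    (hdom : (cpwlDom d β).Nonempty) (zb : Euc m) (hzb : zb ∈ cpwlDom d β) :
    ∀ vb ∈ subdiff (cpwlFun a α d β) zb,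
      sosd (cpwlFun a α d β) zb vb 0 = (Spar (cpwlFun a α d β) zb : Set (Euc m)) :=
  sosd_cpwl_at_zero_eq_parallel_subspace_general hl a α d β zb hzb
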